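/- Let H be a TTM-tree, P a positive integer (the number of processors), and u an internal node of H with mode label n, children v₁, …, v_s, and parent grid parameter g_par (a valid grid). Then the optimal constrained dynamic-gridding volume satisfies the recurrence dvol*(H_u | g_par) = min( (g_par(n) − 1)·|Out(u)| + Σ_{j=1}^{s} dvol*(H_{v_j} | g_par), min over valid grids g of [ |In(u)| + (g(n) − 1)·|Out(u)| + Σ_{j=1}^{s} dvol*(H_{v_j} | g) ] ), where dvol*(H_w | g) = 0 when w is a leaf. -/
import Mathlib


/-- A finite rooted labeled tree, the combinatorial skeleton of a TTM-tree for
an `N`-dimensional tensor.  Every node stores its parent (the root being its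
own parent) and every node reaches the root by iterating `parent`.  The label
of a non-root node is a mode in `{1, …, N}` (for a leaf, it designates the new
factor matrix computed at that leaf); the root's label is ignored. -/
structure TTMTree (N : ℕ) where
  V : Type
  fintypeV : Fintype V
  decEqV : DecidableEq V
  root : V
  parent : V → V
  parent_root : parent root = root
  reaches_root : ∀ v : V, ∃ k : ℕ, parent^[k] v = root
  label : V → Fin N

attribute [instance] TTMTree.fintypeV TTMTree.decEqV

namespace TTMTree

variable {N : ℕ}

/-- A leaf: a node other than the root having no children. -/
def IsLeaf (H : TTMTree N) (v : H.V) : Prop :=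
  v ≠ H.root ∧ ∀ u : H.V, u ≠ v → H.parent u ≠ v

/-- An internal node: a node that is neither the root nor a leaf. -/
def IsInternal (H : TTMTree N) (v : H.V) : Prop :=
  v ≠ H.root ∧ ¬ H.IsLeaf v

/-- `u` lies on the path from the root to `v`, i.e. `u` is an ancestor of `v`
(inclusively: `v` is an ancestor of itself). -/
def IsAncestor (H : TTMTree N) (u v : H.V) : Prop :=
  ∃ k : ℕ, H.parent^[k] v = u

/-- `H` is a (valid) TTM-tree: (ii) there are exactly `N` leaves, each labeled
with a distinct mode; (iv) for every leaf labeled `n`, the path from the root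
to the leaf contains exactly `N - 1` internal nodes, and all the modes other
than `n` appear among their labels. -/
def Valid (H : TTMTree N) : Prop :=
  (∀ n : Fin N, ∃! v : H.V, H.IsLeaf v ∧ H.label v = n) ∧
  (∀ v : H.V, H.IsLeaf v →
    ∃ A : Finset H.V,
      (∀ u : H.V, u ∈ A ↔ (H.IsAncestor u v ∧ H.IsInternal u)) ∧
      A.card = N - 1 ∧
      (∀ m : Fin N, m ≠ H.label v → ∃ u ∈ A, H.label u = m))

end TTMTree

namespace TTMTree

/-- The depth of a node: the least `k` with `parent^[k] v = root`. -/
noncomputable def depth {N : ℕ} (H : TTMTree N) (v : H.V) : ℕ :=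
  @Nat.find (fun k => H.parent^[k] v = H.root) (Classical.decPred _)
    (H.reaches_root v)

/-- Fuel-based helper for the cardinality function. -/
noncomputable def outAux {N : ℕ} (L K : Fin N → ℕ) (H : TTMTree N) :
    ℕ → H.V → ℚ
  | 0, _ => ∏ n : Fin N, (L n : ℚ)
  | k + 1, v =>
      if v = H.root then ∏ n : Fin N, (L n : ℚ)
      else ((K (H.label v) : ℚ) / (L (H.label v) : ℚ)) *
        outAux L K H k (H.parent v)

/-- The cardinality `Out(v)` of the tensor output at node `v`:
`Out(root) = ∏ₙ L n`, and `Out(v) = (K m / L m) · Out(parent v)` for a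
non-root node `v` labeled `m`. -/
noncomputable def out {N : ℕ} (L K : Fin N → ℕ) (H : TTMTree N) (v : H.V) :
    ℚ :=
  H.outAux L K (H.depth v) v

/-- The cardinality `In(v) = Out(parent v)` of the tensor input at node `v`. -/
noncomputable def inVal {N : ℕ} (L K : Fin N → ℕ) (H : TTMTree N) (v : H.V) :
    ℚ :=
  H.out L K (H.parent v)

/-- The set of internal nodes of `H`. -/
noncomputable def internals {N : ℕ} (H : TTMTree N) : Finset H.V :=
  letI := Classical.decPred H.IsInternal
  Finset.univ.filter H.IsInternal

/-- The cost (computational load, in FLOP) of the tree: each internal node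
labeled `m` costs `K m · In(u)`, and the cost of the tree is the sum over all
internal nodes. -/
noncomputable def cost {N : ℕ} (L K : Fin N → ℕ) (H : TTMTree N) : ℚ :=
  ∑ v ∈ H.internals, (K (H.label v) : ℚ) * H.inVal L K v

/-- A tree is binary if every node has at most two children. -/
def Binary {N : ℕ} (H : TTMTree N) : Prop :=
  ∀ v a b c : H.V,
    H.parent a = v → H.parent b = v → H.parent c = v →
    a ≠ v → b ≠ v → c ≠ v → a = b ∨ b = c ∨ a = c

end TTMTree
/-- A valid grid on `P` processors for core lengths `K`: a tuple
`(q 1, …, q N)` of positive integers with `∏ₙ q n = P` and `q n ≤ K n`. -/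
def ValidGrid (N P : ℕ) (K : Fin N → ℕ) : Type :=
  {g : Fin N → ℕ // (∏ n : Fin N, g n) = P ∧ ∀ n : Fin N, 1 ≤ g n ∧ g n ≤ K n}

noncomputable instance {N P : ℕ} {K : Fin N → ℕ} :
    DecidableEq (ValidGrid N P K) :=
  Classical.decEq _

/-- The volume `dvol(H_u, π | g_par)` of a partial grid scheme `π` for the
subtree rooted at `u`, given that the tensor output by the parent of `u` is
represented in the grid `g_par`: the sum, over the internal nodes `z` of the
subtree (labeled, say, `m`), of the TTM volume `(π z m − 1)·Out(z)` plus the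
regridding volume `In(z)` whenever `π z` differs from the grid of the parent
of `z` (taken to be `g_par` for `z = u`). -/
noncomputable def subVol {N : ℕ} (L K : Fin N → ℕ) {P : ℕ} (H : TTMTree N)
    (u : H.V) (gpar : ValidGrid N P K) (π : H.V → ValidGrid N P K) : ℚ :=
  letI := Classical.decPred fun z : H.V => H.IsAncestor u z ∧ H.IsInternal z
  ∑ z ∈ Finset.univ.filter (fun z : H.V => H.IsAncestor u z ∧ H.IsInternal z),
    ((((π z).1 (H.label z) : ℚ) - 1) * H.out L K z +
      if π z ≠ (if z = u then gpar else π (H.parent z)) then H.inVal L K z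
      else 0)

/-- The set of children of a node. -/
def children {N : ℕ} (H : TTMTree N) (u : H.V) : Finset H.V :=
  Finset.univ.filter fun w : H.V => H.parent w = u ∧ w ≠ u

section Aux

open TTMTree

variable {N : ℕ} {H : TTMTree N}

lemma root_iter (k : ℕ) : H.parent^[k] H.root = H.root := by
  induction k with
  | zero => rfl
  | succ k ih => rw [Function.iterate_succ_apply, H.parent_root, ih]

lemma cycle_root {v : H.V} {j : ℕ} (hj : 1 ≤ j) (h : H.parent^[j] v = v) :
    v = H.root := by
  obtain ⟨k, hk⟩ := H.reaches_root v
  have hmul : ∀ m, H.parent^[j * m] v = v := by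
    intro m
    induction m with
    | zero => rfl
    | succ m ih =>
      rw [Nat.mul_succ, Function.iterate_add_apply, h, ih]
  have hk' : k ≤ j * k := Nat.le_mul_of_pos_left k hj
  have h2 : H.parent^[j * k - k + k] v = v := by
    rw [Nat.sub_add_cancel hk']; exact hmul k
  rw [Function.iterate_add_apply, hk, root_iter] at h2
  exact h2.symm

lemma mem_children {u w : H.V} :
    w ∈ children H u ↔ H.parent w = u ∧ w ≠ u := by
  simp [children]

lemma anc_of_child {u w z : H.V} (hw : w ∈ children H u)
    (h : H.IsAncestor w z) : H.IsAncestor u z := by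
  obtain ⟨k, hk⟩ := h
  exact ⟨k + 1, by rw [Function.iterate_succ_apply', hk, (mem_children.1 hw).1]⟩

lemma not_anc_child_self {u w : H.V} (hu : u ≠ H.root)
    (hw : w ∈ children H u) : ¬ H.IsAncestor w u := by
  rintro ⟨k, hk⟩
  exact hu (cycle_root (Nat.succ_le_succ (Nat.zero_le k))
    (by rw [Function.iterate_succ_apply', hk, (mem_children.1 hw).1]))

lemma anc_cases {u z : H.V} (h : H.IsAncestor u z) :
    z = u ∨ ∃ w ∈ children H u, H.IsAncestor w z := by
  obtain ⟨k, hk⟩ := h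
  induction k generalizing z with
  | zero => exact Or.inl hk
  | succ k ih =>
    rw [Function.iterate_succ_apply] at hk
    rcases ih hk with h1 | ⟨w, hw, j, hj⟩
    · by_cases hz : z = u
      · exact Or.inl hz
      · exact Or.inr ⟨z, mem_children.2 ⟨h1, hz⟩, 0, rfl⟩
    · exact Or.inr ⟨w, hw, j + 1, by rw [Function.iterate_succ_apply, hj]⟩

lemma child_unique {u z w₁ w₂ : H.V} (hu : u ≠ H.root)
    (h1 : w₁ ∈ children H u) (h2 : w₂ ∈ children H u)
    (ha1 : H.IsAncestor w₁ z) (ha2 : H.IsAncestor w₂ z) : w₁ = w₂ := by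
  have key : ∀ a b : H.V, a ∈ children H u → b ∈ children H u →
      ∀ ka kb : ℕ, ka ≤ kb → H.parent^[ka] z = a → H.parent^[kb] z = b →
      a = b := by
    intro a b ha hb ka kb hle hka hkb
    have hab : H.parent^[kb - ka] a = b := by
      rw [← hka, ← Function.iterate_add_apply, Nat.sub_add_cancel hle]
      exact hkb
    rcases Nat.eq_zero_or_pos (kb - ka) with h0 | hpos
    · rw [h0] at hab; exact hab
    · exfalso
      obtain ⟨d, hd⟩ := Nat.exists_eq_add_of_le hpos
      rw [hd] at hab
      rw [Nat.add_comm, Function.iterate_succ_apply, (mem_children.1 ha).1]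
        at hab
      have : H.parent^[d + 1] u = u := by
        rw [Function.iterate_succ_apply', hab, (mem_children.1 hb).1]
      exact hu (cycle_root (Nat.succ_le_succ (Nat.zero_le d)) this)
  obtain ⟨k₁, hk₁⟩ := ha1
  obtain ⟨k₂, hk₂⟩ := ha2
  rcases le_total k₁ k₂ with hle | hle
  · exact key _ _ h1 h2 _ _ hle hk₁ hk₂
  · exact (key _ _ h2 h1 _ _ hle hk₂ hk₁).symm

lemma anc_parent {w z : H.V} (h : H.IsAncestor w z) (hz : z ≠ w) :
    H.IsAncestor w (H.parent z) := by
  obtain ⟨k, hk⟩ := h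
  cases k with
  | zero => exact absurd hk hz
  | succ k => exact ⟨k, by rw [← Function.iterate_succ_apply]; exact hk⟩

/-- The subtree of internal nodes below (and including) `u`. -/
noncomputable def subtr (H : TTMTree N) (u : H.V) : Finset H.V :=
  letI := Classical.decPred fun z : H.V => H.IsAncestor u z ∧ H.IsInternal z
  Finset.univ.filter (fun z : H.V => H.IsAncestor u z ∧ H.IsInternal z)

lemma mem_subtr {u z : H.V} :
    z ∈ subtr H u ↔ H.IsAncestor u z ∧ H.IsInternal z := by
  classical
  simp [subtr]

lemma subVol_eq (L K : Fin N → ℕ) {P : ℕ} (u : H.V)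
    (gpar : ValidGrid N P K) (π : H.V → ValidGrid N P K) :
    subVol L K H u gpar π =
      ∑ z ∈ subtr H u,
        ((((π z).1 (H.label z) : ℚ) - 1) * H.out L K z +
          if π z ≠ (if z = u then gpar else π (H.parent z)) then H.inVal L K z
          else 0) := rfl

lemma outAux_nonneg (L K : Fin N → ℕ) (k : ℕ) (v : H.V) :
    0 ≤ outAux L K H k v := by
  induction k generalizing v with
  | zero =>
    exact Finset.prod_nonneg fun n _ => Nat.cast_nonneg _
  | succ k ih =>
    rw [outAux]
    split
    · exact Finset.prod_nonneg fun n _ => Nat.cast_nonneg _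
    · exact mul_nonneg (div_nonneg (Nat.cast_nonneg _) (Nat.cast_nonneg _))
        (ih _)

lemma out_nonneg (L K : Fin N → ℕ) (v : H.V) : 0 ≤ H.out L K v :=
  outAux_nonneg L K _ v

lemma inVal_nonneg (L K : Fin N → ℕ) (v : H.V) : 0 ≤ H.inVal L K v :=
  out_nonneg L K _

lemma subtr_partition {u : H.V} (hu : H.IsInternal u) :
    subtr H u = insert u ((children H u).biUnion fun w => subtr H w) := by
  ext z
  simp only [Finset.mem_insert, Finset.mem_biUnion, mem_subtr]
  constructor
  · rintro ⟨hanc, hint⟩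
    rcases anc_cases hanc with h | ⟨w, hw, h⟩
    · exact Or.inl h
    · exact Or.inr ⟨w, hw, h, hint⟩
  · rintro (rfl | ⟨w, hw, hanc, hint⟩)
    · exact ⟨⟨0, rfl⟩, hu⟩
    · exact ⟨anc_of_child hw hanc, hint⟩

lemma u_not_mem_biUnion {u : H.V} (hu : H.IsInternal u) :
    u ∉ (children H u).biUnion fun w => subtr H w := by
  intro hmem
  obtain ⟨w, hw, hz⟩ := Finset.mem_biUnion.1 hmem
  exact not_anc_child_self hu.1 hw (mem_subtr.1 hz).1

lemma subtr_pairwise_disjoint {u : H.V} (hu : H.IsInternal u) :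
    (↑(children H u) : Set H.V).PairwiseDisjoint fun w => subtr H w := by
  intro w₁ hw₁ w₂ hw₂ hne
  simp only [Function.onFun]
  rw [Finset.disjoint_left]
  replace hw₁ := Finset.mem_coe.1 hw₁
  replace hw₂ := Finset.mem_coe.1 hw₂
  intro z hz1 hz2
  exact hne (child_unique hu.1 hw₁ hw₂ (mem_subtr.1 hz1).1 (mem_subtr.1 hz2).1)

lemma not_mem_subtr_child {u w z : H.V} (hu : H.IsInternal u)
    (hw : w ∈ children H u) (hz : z ∈ subtr H w) : z ≠ u := by
  rintro rfl
  exact not_anc_child_self hu.1 hw (mem_subtr.1 hz).1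

lemma subVol_congr (L K : Fin N → ℕ) {P : ℕ} (w : H.V)
    (g : ValidGrid N P K) (π π' : H.V → ValidGrid N P K)
    (h : ∀ z, H.IsAncestor w z → π z = π' z) :
    subVol L K H w g π = subVol L K H w g π' := by
  rw [subVol_eq, subVol_eq]
  refine Finset.sum_congr rfl fun z hz => ?_
  have hanc := (mem_subtr.1 hz).1
  rw [h z hanc]
  by_cases hzw : z = w
  · subst hzw; simp
  · rw [if_neg hzw, if_neg hzw, h _ (anc_parent hanc hzw)]

lemma subVol_decomp (L K : Fin N → ℕ) {P : ℕ} {u : H.V}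
    (hu : H.IsInternal u) (gpar : ValidGrid N P K)
    (π : H.V → ValidGrid N P K) :
    subVol L K H u gpar π =
      (((π u).1 (H.label u) : ℚ) - 1) * H.out L K u +
        (if π u ≠ gpar then H.inVal L K u else 0) +
        ∑ w ∈ children H u, subVol L K H w (π u) π := by
  rw [subVol_eq, subtr_partition hu, Finset.sum_insert (u_not_mem_biUnion hu),
    Finset.sum_biUnion (subtr_pairwise_disjoint hu)]
  congr 1
  · simp
  · refine Finset.sum_congr rfl fun w hw => ?_
    rw [subVol_eq]
    refine Finset.sum_congr rfl fun z hz => ?_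
    have hzu : z ≠ u := not_mem_subtr_child hu hw hz
    by_cases hzw : z = w
    · subst hzw
      rw [if_neg hzu, if_pos rfl, (mem_children.1 hw).1]
    · rw [if_neg hzu, if_neg hzw]

end Aux

/-- **The recurrence satisfied by the optimal constrained dynamic-gridding
volume.**  Let `dstar u g` be the minimum volume `dvol*(H_u | g)` of a partial
grid scheme for the subtree rooted at `u` given parent grid `g` (hypothesis
`hstar`, stated as an `IsLeast`; for a leaf `w` this minimum is `0`).  Then
for every internal node `u` with mode label `n` and parent grid `gpar`,
`dstar u gpar` is the minimum of the following options:  not regridding,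
`(gpar n − 1)·Out(u) + ∑_{w child of u} dstar w gpar`;  and, for each valid
grid `g`, regridding to `g`,
`In(u) + (g n − 1)·Out(u) + ∑_{w child of u} dstar w g`. -/
theorem dvol_recurrence {N : ℕ} (hN : 2 ≤ N) (L K : Fin N → ℕ)
    (hK : ∀ n, 1 ≤ K n) (hKL : ∀ n, K n ≤ L n)
    (P : ℕ) (hP : 0 < P)
    (H : TTMTree N) (hH : H.Valid)
    (dstar : H.V → ValidGrid N P K → ℚ)
    (hstar : ∀ (w : H.V) (g : ValidGrid N P K),
      IsLeast {c : ℚ | ∃ π : H.V → ValidGrid N P K, subVol L K H w g π = c}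
        (dstar w g))
    (u : H.V) (hu : H.IsInternal u) (gpar : ValidGrid N P K) :
    IsLeast
      ({x : ℚ | x = ((gpar.1 (H.label u) : ℚ) - 1) * H.out L K u +
          ∑ w ∈ children H u, dstar w gpar} ∪
       {x : ℚ | ∃ g : ValidGrid N P K,
          x = H.inVal L K u + ((g.1 (H.label u) : ℚ) - 1) * H.out L K u +
            ∑ w ∈ children H u, dstar w g})
      (dstar u gpar) := by
  classical
  set n := H.label u with hn
  -- For every grid `g` there is a scheme realizing the corresponding candidate.
  have build : ∀ g : ValidGrid N P K, ∃ π : H.V → ValidGrid N P K,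
      subVol L K H u gpar π =
        ((g.1 n : ℚ) - 1) * H.out L K u +
          (if g ≠ gpar then H.inVal L K u else 0) +
          ∑ w ∈ children H u, dstar w g := by
    intro g
    choose opt hopt using fun w : H.V => (hstar w g).1
    set π : H.V → ValidGrid N P K := fun z =>
      if h : ∃ w : H.V, w ∈ children H u ∧ H.IsAncestor w z then opt h.choose z
      else g with hπ
    have hπu : π u = g := by
      rw [hπ]
      refine dif_neg ?_
      rintro ⟨w, hw, hanc⟩
      exact not_anc_child_self hu.1 hw hanc
    refine ⟨π, ?_⟩
    rw [subVol_decomp L K hu gpar π, hπu]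
    congr 1
    refine Finset.sum_congr rfl fun w hw => ?_
    rw [← hopt w]
    refine subVol_congr L K w g π (opt w) fun z hz => ?_
    have hex : ∃ w' : H.V, w' ∈ children H u ∧ H.IsAncestor w' z := ⟨w, hw, hz⟩
    have hch : hex.choose = w :=
      child_unique hu.1 hex.choose_spec.1 hw hex.choose_spec.2 hz
    rw [hπ]
    simp only [dif_pos hex, hch]
  -- Lower bound.
  have lb : ∀ x ∈
      ({x : ℚ | x = ((gpar.1 (H.label u) : ℚ) - 1) * H.out L K u +
          ∑ w ∈ children H u, dstar w gpar} ∪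
       {x : ℚ | ∃ g : ValidGrid N P K,
          x = H.inVal L K u + ((g.1 (H.label u) : ℚ) - 1) * H.out L K u +
            ∑ w ∈ children H u, dstar w g}), dstar u gpar ≤ x := by
    rintro x (hx | ⟨g, hx⟩)
    · obtain ⟨π, hπ⟩ := build gpar
      have h1 : dstar u gpar ≤ subVol L K H u gpar π :=
        (hstar u gpar).2 ⟨π, rfl⟩
      rw [hπ, if_neg (by simp)] at h1
      rw [Set.mem_setOf_eq] at hx
      rw [hx]
      linarith
    · obtain ⟨π, hπ⟩ := build g
      have h1 : dstar u gpar ≤ subVol L K H u gpar π :=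
        (hstar u gpar).2 ⟨π, rfl⟩
      have h2 : (if g ≠ gpar then H.inVal L K u else 0) ≤ H.inVal L K u := by
        split
        · exact le_rfl
        · exact inVal_nonneg L K u
      rw [hπ] at h1
      rw [hx]
      linarith
  refine ⟨?_, lb⟩
  -- Membership: the minimum is attained by one of the candidates.
  obtain ⟨π₀, hπ₀⟩ := (hstar u gpar).1
  have hdec := subVol_decomp L K hu gpar π₀
  rw [hπ₀] at hdec
  have hsum : ∑ w ∈ children H u, dstar w (π₀ u) ≤
      ∑ w ∈ children H u, subVol L K H w (π₀ u) π₀ :=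
    Finset.sum_le_sum fun w _ => (hstar w (π₀ u)).2 ⟨π₀, rfl⟩
  by_cases hgr : π₀ u = gpar
  · left
    rw [hgr] at hdec hsum
    rw [Set.mem_setOf_eq]
    refine le_antisymm (lb _ (Or.inl rfl)) ?_
    rw [hdec, if_neg (by simp)]
    linarith
  · right
    refine ⟨π₀ u, le_antisymm (lb _ (Or.inr ⟨π₀ u, rfl⟩)) ?_⟩
    rw [hdec, if_pos hgr]
    linarith
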